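/- arXiv:math/0301148 — 2 statements merged into one kernel-verified Lean document; each statement's English description precedes it below -/
import Mathlib

section
/- Let X = Y ⊕ Z be an orthogonal decomposition of an N-dimensional Euclidean space with dim Y = n, let M ⊂ Y be convex compact and A ⊂ X convex compact. Then vol_N(A + εM) = ε^n · vol_{N−n}(Pr_Z A) · vol_n(M) + O(ε^{n−1}) as ε → ∞; equivalently, the coefficient of ε^n in the polynomial expansion of vol_N(A + εM) equals vol_{N−n}(Pr_Z A) · vol_n(M). -/
open Pointwise MeasureTheory

def IsBody {E : Type*} [NormedAddCommGroup E] [NormedSpace ℝ E] (K : Set E) : Prop :=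
  Convex ℝ K ∧ IsCompact K ∧ K.Nonempty

/-!
Integrate over `Z` fibrewise. The fibre of `A + εM` over `z ∈ Pr_Z A` is `A_z + εM`; it contains
a translate of `εM`, and if `A` lies in the ball of radius `R` it lies in
`ε • (M + closedBall 0 (R / ε))`. Hence `vol(A + εM) / ε^n` is squeezed between
`vol(Pr_Z A) vol(M)` and `vol(Pr_Z A) vol(M + closedBall 0 (R / ε))`, which tends to the former.
For a polynomial `P`, the limit of `P(ε) / ε^n`, when it exists, is the coefficient of `ε^n`.
-/

open Filter Set Metric Topology Polynomial

theorem Polynomial.coeff_eq_of_tendsto_eval_div_pow {𝕜 : Type*} [NormedField 𝕜] [LinearOrder 𝕜]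
    [IsStrictOrderedRing 𝕜] [OrderTopology 𝕜] {P : 𝕜[X]} {n : ℕ} {L : 𝕜}
    (h : Tendsto (fun x => P.eval x / x ^ n) atTop (𝓝 L)) : P.coeff n = L := by
  have hXn : (X ^ n : 𝕜[X]).degree = n := degree_X_pow n
  have h' : Tendsto (fun x => P.eval x / (X ^ n : 𝕜[X]).eval x) atTop (𝓝 L) := by
    simpa only [eval_pow, eval_X] using h
  rcases lt_trichotomy P.degree n with hlt | heq | hgt
  · rw [coeff_eq_zero_of_degree_lt hlt]
    exact tendsto_nhds_unique (div_tendsto_atTop_zero_of_degree_lt P _ (hXn ▸ hlt)) h'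
  · have hlim := div_tendsto_atTop_leadingCoeff_div_of_degree_eq P _ (heq.trans hXn.symm)
    rw [leadingCoeff_X_pow, div_one] at hlim
    rw [← tendsto_nhds_unique hlim h', leadingCoeff, natDegree_eq_of_degree_eq_some heq]
  · exact absurd (abs_div_tendsto_atTop_atTop_of_degree_gt P _ (hXn ▸ hgt)
      (pow_ne_zero n X_ne_zero)) (not_tendsto_atTop_of_tendsto_nhds h'.abs)

theorem Set.preimage_prodMk_add_prod_zero {E F : Type*} [Add E] [AddZeroClass F]
    (A : Set (E × F)) (N : Set E) (z : F) :
    (·, z) ⁻¹' (A + N ×ˢ {0}) = (·, z) ⁻¹' A + N := by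
  ext y
  constructor
  · rintro ⟨a, ha, b, ⟨hb, hb0⟩, hab⟩
    obtain rfl : a.2 = z := by simpa [show b.2 = 0 from hb0] using congrArg Prod.snd hab
    exact ⟨a.1, ha, b.1, hb, congrArg Prod.fst hab⟩
  · rintro ⟨u, hu, w, hw, rfl⟩
    exact ⟨(u, z), hu, (w, 0), ⟨hw, rfl⟩, by simp⟩

namespace MeasureTheory.Measure

section Fibers

variable {E F : Type*} [NormedAddCommGroup E] [MeasurableSpace E] [OpensMeasurableSpace E]
  [SecondCountableTopology E] [NormedAddCommGroup F] [MeasurableSpace F] [OpensMeasurableSpace F]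
  {μ : Measure E} {ν : Measure F} [SFinite μ] [SFinite ν] {A : Set (E × F)} {N : Set E}

theorem prod_add_prod_zero_eq_setLIntegral (hA : IsCompact A) (hN : IsCompact N) :
    (μ.prod ν) (A + N ×ˢ {0}) = ∫⁻ z in Prod.snd '' A, μ ((·, z) ⁻¹' A + N) ∂ν := by
  rw [prod_apply_symm (hA.add (hN.prod isCompact_singleton)).measurableSet,
    setLIntegral_eq_of_support_subset]
  · simp only [Set.preimage_prodMk_add_prod_zero]
  · intro z hz
    by_contra hzA
    have hfiber : (·, z) ⁻¹' A = ∅ :=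
      eq_empty_of_forall_notMem fun y hy => hzA ⟨(y, z), hy, rfl⟩
    simp [hfiber] at hz

theorem mul_le_prod_add_prod_zero [μ.IsAddLeftInvariant] (hA : IsCompact A)
    (hN : IsCompact N) : ν (Prod.snd '' A) * μ N ≤ (μ.prod ν) (A + N ×ˢ {0}) := by
  rw [prod_add_prod_zero_eq_setLIntegral hA hN, mul_comm, ← setLIntegral_const]
  refine setLIntegral_mono' (hA.image continuous_snd).measurableSet ?_
  rintro _ ⟨a, ha, rfl⟩
  calc μ N = μ (a.1 +ᵥ N) := (measure_vadd μ a.1 N).symm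
    _ ≤ μ ((·, a.2) ⁻¹' A + N) := measure_mono (vadd_set_subset_add ha)

theorem prod_add_prod_zero_le_mul {R : ℝ} (hA : IsCompact A) (hN : IsCompact N)
    (hAR : A ⊆ Prod.fst ⁻¹' closedBall 0 R) :
    (μ.prod ν) (A + N ×ˢ {0}) ≤ ν (Prod.snd '' A) * μ (N + closedBall 0 R) := by
  rw [prod_add_prod_zero_eq_setLIntegral hA hN, mul_comm, ← setLIntegral_const]
  refine lintegral_mono fun z => measure_mono ?_
  rw [add_comm]
  exact add_subset_add_left fun y hy => hAR hy

end Fibers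

theorem addHaar_smul_add_closedBall {E : Type*} [NormedAddCommGroup E] [NormedSpace ℝ E]
    [FiniteDimensional ℝ E] [MeasurableSpace E] [BorelSpace E] (μ : Measure E)
    [μ.IsAddHaarMeasure] (M : Set E) {ε R : ℝ} (hε : 0 < ε) (hR : 0 ≤ R) :
    μ (ε • M + closedBall 0 R) =
      ENNReal.ofReal (ε ^ Module.finrank ℝ E) * μ (M + closedBall 0 (R / ε)) := by
  have hball : ε • closedBall (0 : E) (R / ε) = closedBall 0 R := by
    rw [smul_closedBall _ _ (div_nonneg hR hε.le), smul_zero, Real.norm_of_nonneg hε.le,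
      mul_div_cancel₀ R hε.ne']
  rw [← hball, ← smul_add, addHaar_smul_of_nonneg μ hε.le]

theorem tendsto_add_closedBall_div_atTop {E : Type*} [NormedAddCommGroup E] [ProperSpace E]
    [MeasurableSpace E] [OpensMeasurableSpace E] (μ : Measure E) [IsFiniteMeasureOnCompacts μ]
    {M : Set E} (hM : IsCompact M) {R : ℝ} (hR : 0 ≤ R) :
    Tendsto (fun ε => μ (M + closedBall 0 (R / ε))) atTop (𝓝 (μ M)) := by
  have hδ : Tendsto (fun ε : ℝ => R / ε) atTop (𝓝 0) := tendsto_const_nhds.div_atTop tendsto_id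
  refine ((tendsto_measure_cthickening_of_isCompact hM).comp hδ).congr' ?_
  filter_upwards [eventually_gt_atTop 0] with ε hε
  rw [Function.comp_apply, hM.add_closedBall_zero (div_nonneg hR hε.le)]

theorem tendsto_prod_add_smul_prod_zero_div_pow {E F : Type*} [NormedAddCommGroup E]
    [NormedSpace ℝ E] [FiniteDimensional ℝ E] [MeasurableSpace E] [BorelSpace E]
    [NormedAddCommGroup F] [NormedSpace ℝ F] [MeasurableSpace F] [OpensMeasurableSpace F]
    (μ : Measure E) [μ.IsAddHaarMeasure] (ν : Measure F) [SFinite ν] [IsFiniteMeasureOnCompacts ν]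
    {A : Set (E × F)} (hA : IsCompact A) {M : Set E} (hM : IsCompact M) :
    Tendsto (fun ε : ℝ =>
        (μ.prod ν) (A + ε • (M ×ˢ ({0} : Set F))) / ENNReal.ofReal (ε ^ Module.finrank ℝ E))
      atTop (𝓝 (ν (Prod.snd '' A) * μ M)) := by
  obtain ⟨R, hR, hAR⟩ := hA.isBounded.subset_closedBall_lt 0 0
  have hAR' : A ⊆ Prod.fst ⁻¹' closedBall 0 R := fun p hp =>
    mem_closedBall_zero_iff.2 ((norm_fst_le p).trans (mem_closedBall_zero_iff.1 (hAR hp)))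
  have hνA : ν (Prod.snd '' A) ≠ ⊤ := (hA.image continuous_snd).measure_ne_top
  simp_rw [smul_set_prod, smul_set_singleton, smul_zero]
  refine tendsto_of_tendsto_of_tendsto_of_le_of_le' tendsto_const_nhds
    ((ENNReal.Tendsto.const_mul (tendsto_add_closedBall_div_atTop μ hM hR.le) (.inr hνA))) ?_ ?_
  · filter_upwards [eventually_gt_atTop 0] with ε hε
    rw [ENNReal.le_div_iff_mul_le (.inl (by positivity)) (.inl ENNReal.ofReal_ne_top)]
    calc ν (Prod.snd '' A) * μ M * ENNReal.ofReal (ε ^ Module.finrank ℝ E)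
        = ν (Prod.snd '' A) * μ (ε • M) := by
          rw [addHaar_smul_of_nonneg μ hε.le, mul_assoc, mul_comm (μ M)]
      _ ≤ _ := mul_le_prod_add_prod_zero hA (hM.smul ε)
  · filter_upwards [eventually_gt_atTop 0] with ε hε
    rw [ENNReal.div_le_iff_le_mul (.inl (by positivity)) (.inl ENNReal.ofReal_ne_top)]
    calc (μ.prod ν) (A + (ε • M) ×ˢ {0})
        ≤ ν (Prod.snd '' A) * μ (ε • M + closedBall 0 R) :=
          prod_add_prod_zero_le_mul hA (hM.smul ε) hAR'
      _ = _ := by rw [addHaar_smul_add_closedBall μ M hε hR.le, mul_left_comm, mul_comm]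

end MeasureTheory.Measure

/-- For an orthogonal decomposition `X = Y ⊕ Z` (modelled as
`X = Y × Z`, `Y = ℝ^n`, `Z = ℝ^{N-n}`, orthogonal projection onto `Z` = `Prod.snd`),
`M ⊂ Y` convex compact and `A ⊂ X` convex compact, the coefficient of `ε^n` in the
polynomial expansion of `vol_N(A + εM)` equals `vol_{N-n}(Pr_Z A) · vol_n(M)`. -/
theorem steiner_coefficient_of_subspace_body (n m : ℕ)
    (M : Set (EuclideanSpace ℝ (Fin n))) (hM : IsBody M)
    (A : Set (EuclideanSpace ℝ (Fin n) × EuclideanSpace ℝ (Fin m))) (hA : IsBody A)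
    (P : Polynomial ℝ)
    (hP : ∀ ε : ℝ, 0 ≤ ε →
      (volume (A + ε • (M ×ˢ ({0} : Set (EuclideanSpace ℝ (Fin m)))))).toReal
        = P.eval ε) :
    P.coeff n = (volume (Prod.snd '' A)).toReal * (volume M).toReal := by
  obtain ⟨-, hAc, -⟩ := hA
  obtain ⟨-, hMc, -⟩ := hM
  have hlim := Measure.tendsto_prod_add_smul_prod_zero_div_pow volume volume hAc hMc
  rw [← Measure.volume_eq_prod, finrank_euclideanSpace_fin] at hlim
  have hfin : volume (Prod.snd '' A) * volume M ≠ ⊤ :=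
    ENNReal.mul_ne_top (hAc.image continuous_snd).measure_ne_top hMc.measure_ne_top
  refine Polynomial.coeff_eq_of_tendsto_eval_div_pow ?_
  rw [← ENNReal.toReal_mul]
  refine ((ENNReal.tendsto_toReal hfin).comp hlim).congr' ?_
  filter_upwards [eventually_ge_atTop 0] with ε hε
  rw [Function.comp_apply, ENNReal.toReal_div, ENNReal.toReal_ofReal (by positivity), hP ε hε]
end

section
/- Every U(n+1)-orbit in the real Grassmannian of k-dimensional real subspaces of ℂ^{n+1} intersects the subset of subspaces contained in ℂ^n ⊂ ℂ^{n+1} nontrivially, provided n ≥ k. Consequently, the restriction map C(Gr^ℝ_k(ℂ^{n+1}))^{U(n+1)} → C(Gr^ℝ_k(ℂ^n))^{U(n)} on invariant continuous functions is injective. -/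
/-!
The complex span `V` of a real `k`-dimensional subspace `W ⊆ ℂ^{n+1}` has complex dimension at
most `k ≤ n`, so there is a unit vector `v ⟂ V`. Completing `v` to an orthonormal basis with `v`
in the last slot gives a unitary `g` whose last row is `w ↦ ⟪v, w⟫`; hence `g W ⊆ ℂ^n`. Since `g`
preserves real dimension, an invariant function is determined by its values on subspaces of `ℂ^n`.
-/

open Module

/-- The real subspace `ℂ^n ⊂ ℂ^{n+1}` (last complex coordinate zero), viewed as an
`ℝ`-submodule of `ℂ^{n+1}`. -/
noncomputable def lastCoordZero (n : ℕ) : Submodule ℝ (Fin (n + 1) → ℂ) :=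
  LinearMap.ker
    ((LinearMap.proj (Fin.last n) : (Fin (n + 1) → ℂ) →ₗ[ℂ] ℂ).restrictScalars ℝ)

/-- The action of a unitary matrix on real subspaces of `ℂ^{n+1}`. -/
noncomputable def unitaryMap (n : ℕ) (g : Matrix.unitaryGroup (Fin (n + 1)) ℂ)
    (W : Submodule ℝ (Fin (n + 1) → ℂ)) : Submodule ℝ (Fin (n + 1) → ℂ) :=
  Submodule.map
    ((Matrix.mulVecLin (g : Matrix (Fin (n + 1)) (Fin (n + 1)) ℂ)).restrictScalars ℝ) W

open Matrix

theorem Submodule.finrank_span_le_finrank_of_tower {R S M : Type*} [Field R] [DivisionRing S]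
    [Algebra R S] [AddCommGroup M] [Module R M] [Module S M] [IsScalarTower R S M] (W : Submodule R M) [Module.Finite R W] :
    finrank S (span S (W : Set M)) ≤ finrank R W := by
  let b := Module.finBasis R W
  have hW : (W : Set M) ⊆ span S (Set.range fun i ↦ (b i : M)) := by
    intro x hx
    have hmem : (⟨x, hx⟩ : W) ∈ span R (Set.range b) := b.mem_span _
    have := Submodule.mem_map_of_mem (f := W.subtype) hmem
    rw [Submodule.map_span, ← Set.range_comp] at this
    exact Submodule.span_le_restrictScalars R S _ this
  have hspan : span S (W : Set M) = span S (Set.range fun i ↦ (b i : M)) :=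
    le_antisymm (span_le.mpr hW) (span_mono (Set.range_subset_iff.mpr fun i ↦ (b i).2))
  calc finrank S (span S (W : Set M))
      = finrank S (span S (Set.range fun i ↦ (b i : M))) := by rw [hspan]
    _ ≤ Fintype.card (Fin (finrank R W)) := finrank_range_le_card _
    _ = finrank R W := Fintype.card_fin _

theorem Submodule.exists_norm_eq_one_mem_orthogonal {𝕜 E : Type*} [RCLike 𝕜]
    [NormedAddCommGroup E] [InnerProductSpace 𝕜 E] [FiniteDimensional 𝕜 E] {K : Submodule 𝕜 E}
    (hK : finrank 𝕜 K < finrank 𝕜 E) : ∃ v ∈ Kᗮ, ‖v‖ = 1 := by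
  have hKtop : K ≠ ⊤ := fun h ↦ by rw [h, finrank_top] at hK; exact lt_irrefl _ hK
  obtain ⟨u, hu, hu0⟩ := Submodule.exists_mem_ne_zero_of_ne_bot
    (mt Submodule.orthogonal_eq_bot_iff.mp hKtop)
  exact ⟨(‖u‖ : 𝕜)⁻¹ • u, Kᗮ.smul_mem _ hu, norm_smul_inv_norm hu0⟩

theorem Matrix.exists_mem_unitaryGroup_mulVec_apply_eq_inner {𝕜 ι : Type*} [RCLike 𝕜]
    [Fintype ι] [DecidableEq ι] (i : ι) {v : EuclideanSpace 𝕜 ι} (hv : ‖v‖ = 1) :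
    ∃ g ∈ unitaryGroup ι 𝕜, ∀ w : ι → 𝕜, (g *ᵥ w) i = inner 𝕜 v (WithLp.toLp 2 w) := by
  have hv' : Orthonormal 𝕜 (({i} : Set ι).domRestrict fun _ ↦ v) :=
    ⟨fun _ ↦ hv, fun j k hjk ↦ absurd (Subtype.ext (j.2.trans k.2.symm)) hjk⟩
  obtain ⟨b, hb⟩ := hv'.exists_orthonormalBasis_extension_of_card_eq (by simp)
  refine ⟨b.toBasis.toMatrix (EuclideanSpace.basisFun ι 𝕜),
    b.toMatrix_orthonormalBasis_mem_unitary _, fun w ↦ ?_⟩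
  -- `g` is the change of basis to an orthonormal basis `b` with `b i = v`, so `(g *ᵥ w) i` is the
  -- `i`-th coordinate of `w` in `b`, namely `⟪v, w⟫`.
  have := Basis.toMatrix_mulVec_repr (b' := b.toBasis) (b := (EuclideanSpace.basisFun ι 𝕜).toBasis)
    (WithLp.toLp 2 w)
  rw [← hb i rfl, ← b.repr_apply_apply, ← OrthonormalBasis.coe_toBasis_repr_apply, ← this]
  rfl

theorem finrank_unitaryMap (n : ℕ) (g : Matrix.unitaryGroup (Fin (n + 1)) ℂ)
    (W : Submodule ℝ (Fin (n + 1) → ℂ)) : finrank ℝ (unitaryMap n g W) = finrank ℝ W :=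
  LinearEquiv.finrank_map_eq ((UnitaryGroup.toLinearEquiv g).restrictScalars ℝ) W

theorem exists_unitaryMap_le_lastCoordZero {n : ℕ} (W : Submodule ℝ (Fin (n + 1) → ℂ))
    (hW : finrank ℝ W ≤ n) : ∃ g : Matrix.unitaryGroup (Fin (n + 1)) ℂ,
      unitaryMap n g W ≤ lastCoordZero n := by
  let W' : Submodule ℝ (EuclideanSpace ℂ (Fin (n + 1))) :=
    W.map ((WithLp.linearEquiv 2 ℝ (Fin (n + 1) → ℂ)).symm : _ →ₗ[ℝ] _)
  let V := Submodule.span ℂ (W' : Set (EuclideanSpace ℂ (Fin (n + 1))))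
  have hV : finrank ℂ V < finrank ℂ (EuclideanSpace ℂ (Fin (n + 1))) :=
    calc finrank ℂ V ≤ finrank ℝ W' := W'.finrank_span_le_finrank_of_tower
      _ = finrank ℝ W := LinearEquiv.finrank_map_eq _ _
      _ < n + 1 := Nat.lt_succ_of_le hW
      _ = _ := by simp
  obtain ⟨v, hvV, hv⟩ := Submodule.exists_norm_eq_one_mem_orthogonal hV
  obtain ⟨g, hg, hgv⟩ := exists_mem_unitaryGroup_mulVec_apply_eq_inner (Fin.last n) hv
  refine ⟨⟨g, hg⟩, ?_⟩
  rintro _ ⟨w, hw, rfl⟩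
  have hwV : WithLp.toLp 2 w ∈ V := Submodule.subset_span ⟨w, hw, rfl⟩
  exact (hgv w).trans ((Submodule.mem_orthogonal' V v).mp hvV _ hwV)

/-- for `n ≥ k`, every `U(n+1)`-orbit in the Grassmannian of real
`k`-dimensional subspaces of `ℂ^{n+1}` meets the set of subspaces contained in
`ℂ^n ⊂ ℂ^{n+1}`; consequently the restriction map on `U(n+1)`-invariant functions on
`Gr^ℝ_k(ℂ^{n+1})` to functions on `Gr^ℝ_k(ℂ^n)` is injective. -/
theorem unitary_orbits_meet_hyperplane_grassmannian (n k : ℕ) (hk : k ≤ n) :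
    (∀ W : Submodule ℝ (Fin (n + 1) → ℂ), finrank ℝ W = k →
      ∃ g : Matrix.unitaryGroup (Fin (n + 1)) ℂ, unitaryMap n g W ≤ lastCoordZero n)
    ∧ (∀ f f' : Submodule ℝ (Fin (n + 1) → ℂ) → ℝ,
        (∀ (g : Matrix.unitaryGroup (Fin (n + 1)) ℂ) (W : Submodule ℝ (Fin (n + 1) → ℂ)),
          f (unitaryMap n g W) = f W) →
        (∀ (g : Matrix.unitaryGroup (Fin (n + 1)) ℂ) (W : Submodule ℝ (Fin (n + 1) → ℂ)),
          f' (unitaryMap n g W) = f' W) →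
        (∀ W : Submodule ℝ (Fin (n + 1) → ℂ), finrank ℝ W = k →
          W ≤ lastCoordZero n → f W = f' W) →
        ∀ W : Submodule ℝ (Fin (n + 1) → ℂ), finrank ℝ W = k → f W = f' W) := by
  have orbit_meets (W : Submodule ℝ (Fin (n + 1) → ℂ)) (hW : finrank ℝ W = k) :=
    exists_unitaryMap_le_lastCoordZero W (hW ▸ hk)
  refine ⟨orbit_meets, fun f f' hf hf' hrestr W hW ↦ ?_⟩
  obtain ⟨g, hg⟩ := orbit_meets W hW
  calc f W = f (unitaryMap n g W) := (hf g W).symm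
    _ = f' (unitaryMap n g W) := hrestr _ ((finrank_unitaryMap n g W).trans hW) hg
    _ = f' W := hf' g W
end
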